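/- arXiv:2004.01025 — 3 statements merged into one kernel-verified Lean document; each statement's English description precedes it below -/
import Mathlib

section
/- Let H : ℝ^d → ℝ^{d×d} take positive definite values with αI ⪯ H(w) ⪯ βI for all w (0 < α ≤ β), let F be γ-smooth and λ-strongly convex with respect to the Euclidean norm with minimum F*, and consider updates w_{k+1} = w(η) where w(t) solves ẇ(t) = −H(w(t))⁻¹∇F(w_k) with w(0) = w_k and stepsize η = α²/(γβ). Then F(w_K) − F* ≤ (F(w_0) − F*)·exp(−λα²K/(γβ²)). -/
/-!
Write `g = ∇F(w_k)` and let `w(t)` be the flow of one step, so `H(w) ẇ = -g`. Cauchy–Schwarz for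
the form `⟪·, H ·⟫` gives `‖H v‖² ≤ β ⟪v, H v⟫`, hence `⟪g, ẇ⟫ ≤ -‖g‖²/β`, while `H ⪰ αI` bounds
the speed by `‖g‖/α`. With γ-smoothness, `d/dt F(w(t)) ≤ -‖g‖²/β + γ‖g‖² t/α²`, and integrating up
to `η = α²/(γβ)` yields `F(w_{k+1}) ≤ F(w_k) - α²‖g‖²/(2γβ²)`. The Polyak–Łojasiewicz inequality
`‖g‖² ≥ 2λ(F(w_k) - F*)` implied by strong convexity turns this into the contraction of `F - F*`
by the factor `1 - λα²/(γβ²) ≤ exp(-λα²/(γβ²))`.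
-/

open Set RealInnerProductSpace

variable {E : Type*} [NormedAddCommGroup E] [InnerProductSpace ℝ E]

namespace LinearMap.IsPositive

variable {T : E →ₗ[ℝ] E}

theorem inner_sq_le_inner_mul_inner (hT : T.IsPositive) (u v : E) :
    ⟪u, T v⟫ ^ 2 ≤ ⟪u, T u⟫ * ⟪v, T v⟫ := by
  have hquad : ∀ t : ℝ, 0 ≤ ⟪v, T v⟫ * (t * t) + 2 * ⟪u, T v⟫ * t + ⟪u, T u⟫ := by
    intro t
    have h := hT.inner_nonneg_right (u + t • v)
    have hsymm : ⟪v, T u⟫ = ⟪u, T v⟫ := by rw [← hT.isSymmetric v u, real_inner_comm]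
    simp only [map_add, map_smul, inner_add_left, inner_add_right, real_inner_smul_left,
      real_inner_smul_right, hsymm] at h
    linarith
  have hdisc := discrim_le_zero hquad
  rw [discrim] at hdisc
  nlinarith

theorem norm_apply_sq_le {β : ℝ} (hT : T.IsPositive) (hTβ : ∀ v, ⟪v, T v⟫ ≤ β * ‖v‖ ^ 2)
    (v : E) : ‖T v‖ ^ 2 ≤ β * ⟪v, T v⟫ := by
  rcases (norm_nonneg (T v)).eq_or_lt with h0 | hpos
  · rw [← h0, norm_eq_zero.mp h0.symm, inner_zero_right]
    simp
  have hcs := hT.inner_sq_le_inner_mul_inner v (T v)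
  rw [← hT.isSymmetric v (T v), real_inner_self_eq_norm_sq] at hcs
  have hβ := hTβ (T v)
  have hvTv := hT.inner_nonneg_right v
  refine le_of_mul_le_mul_left ?_ (pow_pos hpos 2)
  nlinarith

end LinearMap.IsPositive

theorem mul_norm_le_norm_of_mul_sq_le_inner {α : ℝ} {u v : E} (h : α * ‖v‖ ^ 2 ≤ ⟪v, u⟫) :
    α * ‖v‖ ≤ ‖u‖ := by
  rcases (norm_nonneg v).eq_or_lt with h0 | hpos
  · rw [← h0, mul_zero]
    exact norm_nonneg u
  refine le_of_mul_le_mul_left ?_ hpos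
  nlinarith [real_inner_le_norm v u]

theorem image_le_of_hasDerivAt_le_affine {f f' : ℝ → ℝ} {η a b : ℝ} (hη : 0 ≤ η)
    (hf : ∀ t ∈ Icc 0 η, HasDerivAt f (f' t) t) (hf' : ∀ t ∈ Icc 0 η, f' t ≤ -a + b * t) :
    f η ≤ f 0 - a * η + b / 2 * η ^ 2 := by
  have hB : ∀ t : ℝ, HasDerivAt (fun s => f 0 - a * s + b / 2 * s ^ 2) (-a + b * t) t := by
    intro t
    refine ((((hasDerivAt_id t).const_mul a).const_sub (f 0)).add
      ((hasDerivAt_pow 2 t).const_mul (b / 2))).congr_deriv ?_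
    norm_num
    ring
  refine image_le_of_deriv_right_le_deriv_boundary
    (fun t ht => (hf t ht).continuousAt.continuousWithinAt)
    (fun t ht => (hf t (Ico_subset_Icc_self ht)).hasDerivWithinAt) (by simp)
    (fun t _ => (hB t).continuousAt.continuousWithinAt) (fun t _ => (hB t).hasDerivWithinAt)
    (fun t ht => hf' t (Ico_subset_Icc_self ht)) ⟨hη, le_rfl⟩

theorem two_mul_sub_le_norm_gradient_sq [CompleteSpace E] {F : E → ℝ} {lam : ℝ} (hlam : 0 ≤ lam)
    (hsc : ∀ x y, F x + ⟪gradient F x, y - x⟫ + lam / 2 * ‖y - x‖ ^ 2 ≤ F y) (x y : E) :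
    2 * lam * (F x - F y) ≤ ‖gradient F x‖ ^ 2 := by
  have hxy := hsc x y
  have hcs := neg_le_of_abs_le (abs_real_inner_le_norm (gradient F x) (y - x))
  nlinarith [sq_nonneg (‖gradient F x‖ - lam * ‖y - x‖)]

section MirrorlessStep

variable [CompleteSpace E]

/-- `w'` is the time-`η` point of the flow `ẇ = -H(w)⁻¹ ∇F(w₀)` started at `w(0) = w₀ = w`,
written as `H(w) ẇ = -∇F(w₀)` so that no inverse appears. -/
def IsMirrorlessStep (F : E → ℝ) (H : E → E →L[ℝ] E) (η : ℝ) (w w' : E) : Prop :=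
  ∃ p p' : ℝ → E, p 0 = w ∧ w' = p η ∧
    ∀ t ∈ Icc (0 : ℝ) η, HasDerivAt p (p' t) t ∧ H (p t) (p' t) = -gradient F w

variable {F : E → ℝ} {H : E → E →L[ℝ] E} {α β γ η : ℝ} {w w' : E}

theorem IsMirrorlessStep.le_sub_add_sq (hα : 0 < α) (hβ : 0 < β) (hγ : 0 ≤ γ) (hη : 0 ≤ η)
    (hF : Differentiable ℝ F) (hsmooth : ∀ x y, ‖gradient F x - gradient F y‖ ≤ γ * ‖x - y‖)
    (hHsym : ∀ x, (H x : E →ₗ[ℝ] E).IsSymmetric) (hHlb : ∀ x v, α * ‖v‖ ^ 2 ≤ ⟪v, H x v⟫)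
    (hHub : ∀ x v, ⟪v, H x v⟫ ≤ β * ‖v‖ ^ 2) (h : IsMirrorlessStep F H η w w') :
    F w' ≤ F w - ‖gradient F w‖ ^ 2 / β * η + γ * ‖gradient F w‖ ^ 2 / α ^ 2 / 2 * η ^ 2 := by
  obtain ⟨p, p', rfl, rfl, hode⟩ := h
  set g := gradient F (p 0)
  have hHpos : ∀ x, (H x : E →ₗ[ℝ] E).IsPositive := fun x =>
    (LinearMap.isPositive_iff _).2 ⟨hHsym x, fun v => by
      rw [real_inner_comm]
      exact le_trans (by positivity) (hHlb x v)⟩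
  have speed : ∀ t ∈ Icc 0 η, ‖p' t‖ ≤ ‖g‖ / α := fun t ht => by
    rw [le_div_iff₀' hα]
    simpa [(hode t ht).2] using mul_norm_le_norm_of_mul_sq_le_inner (hHlb (p t) (p' t))
  have dist : ∀ t ∈ Icc 0 η, ‖p t - p 0‖ ≤ ‖g‖ / α * t := by
    simpa using norm_image_sub_le_of_norm_deriv_le_segment'
      (fun t ht => (hode t ht).1.hasDerivWithinAt) (fun t ht => speed t (Ico_subset_Icc_self ht))
  have descent_dir : ∀ t ∈ Icc 0 η, ⟪g, p' t⟫ ≤ -(‖g‖ ^ 2 / β) := fun t ht => by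
    have := (hHpos (p t)).norm_apply_sq_le (hHub (p t)) (p' t)
    simp only [ContinuousLinearMap.coe_coe, (hode t ht).2, norm_neg, inner_neg_right,
      real_inner_comm g] at this
    rw [le_neg, div_le_iff₀ hβ]
    linarith
  have slope : ∀ t ∈ Icc 0 η,
      ⟪gradient F (p t), p' t⟫ ≤ -(‖g‖ ^ 2 / β) + γ * ‖g‖ ^ 2 / α ^ 2 * t := fun t ht => by
    calc ⟪gradient F (p t), p' t⟫ = ⟪g, p' t⟫ + ⟪gradient F (p t) - g, p' t⟫ := by
          rw [inner_sub_left]; ring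
      _ ≤ -(‖g‖ ^ 2 / β) + γ * ‖p t - p 0‖ * ‖p' t‖ := by
          gcongr
          · exact descent_dir t ht
          · exact (real_inner_le_norm _ _).trans
              (mul_le_mul_of_nonneg_right (hsmooth _ _) (norm_nonneg _))
      _ ≤ -(‖g‖ ^ 2 / β) + γ * (‖g‖ / α * t) * (‖g‖ / α) := by
          gcongr
          exacts [mul_nonneg hγ (mul_nonneg (by positivity) ht.1), dist t ht, speed t ht]
      _ = -(‖g‖ ^ 2 / β) + γ * ‖g‖ ^ 2 / α ^ 2 * t := by ring
  have hFp : ∀ t ∈ Icc 0 η, HasDerivAt (F ∘ p) ⟪gradient F (p t), p' t⟫ t := fun t ht => by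
    simpa using (hF (p t)).hasGradientAt.hasFDerivAt.comp_hasDerivAt t (hode t ht).1
  have := image_le_of_hasDerivAt_le_affine hη hFp slope
  simp only [Function.comp_apply] at this
  linarith

theorem IsMirrorlessStep.le_sub (hα : 0 < α) (hβ : 0 < β) (hγ : 0 < γ)
    (hF : Differentiable ℝ F) (hsmooth : ∀ x y, ‖gradient F x - gradient F y‖ ≤ γ * ‖x - y‖)
    (hHsym : ∀ x, (H x : E →ₗ[ℝ] E).IsSymmetric) (hHlb : ∀ x v, α * ‖v‖ ^ 2 ≤ ⟪v, H x v⟫)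
    (hHub : ∀ x v, ⟪v, H x v⟫ ≤ β * ‖v‖ ^ 2) (hη : η = α ^ 2 / (γ * β))
    (h : IsMirrorlessStep F H η w w') :
    F w' ≤ F w - α ^ 2 * ‖gradient F w‖ ^ 2 / (2 * γ * β ^ 2) := by
  have := h.le_sub_add_sq hα hβ hγ.le (by rw [hη]; positivity) hF hsmooth hHsym hHlb hHub
  convert this using 2
  rw [hη]
  field_simp
  ring

end MirrorlessStep

/-- Linear convergence of mirrorless Mirror Descent: with `αI ⪯ H(w) ⪯ βI`,
`F` γ-smooth and λ-strongly convex with minimum `F*`, and stepsize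
`η = α²/(γβ)`, the updates `w_{k+1} = w(η)` of `ẇ = −H(w)⁻¹∇F(w_k)`, `w(0) = w_k`,
satisfy `F(w_K) − F* ≤ (F(w_0) − F*)·exp(−λα²K/(γβ²))`. -/
theorem stmt7 {d : ℕ} (F : EuclideanSpace ℝ (Fin d) → ℝ) (Fstar : ℝ)
    (H : EuclideanSpace ℝ (Fin d) → (EuclideanSpace ℝ (Fin d) →L[ℝ] EuclideanSpace ℝ (Fin d)))
    (α β γ lam η : ℝ) (hα : 0 < α) (hαβ : α ≤ β) (hγ : 0 < γ) (hlam : 0 < lam)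
    (hF : Differentiable ℝ F)
    (hsmooth : ∀ x y, ‖gradient F x - gradient F y‖ ≤ γ * ‖x - y‖)
    (hsc : ∀ x y, F x + ⟪gradient F x, y - x⟫ + lam / 2 * ‖y - x‖ ^ 2 ≤ F y)
    (hmin : ∃ wstar, F wstar = Fstar ∧ ∀ x, Fstar ≤ F x)
    (hHsym : ∀ x u v, ⟪H x u, v⟫ = ⟪u, H x v⟫)
    (hHlb : ∀ x v, α * ‖v‖ ^ 2 ≤ ⟪v, H x v⟫)
    (hHub : ∀ x v, ⟪v, H x v⟫ ≤ β * ‖v‖ ^ 2)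
    (hη : η = α ^ 2 / (γ * β))
    (ws : ℕ → EuclideanSpace ℝ (Fin d))
    (hupd : ∀ k : ℕ, ∃ p p' : ℝ → EuclideanSpace ℝ (Fin d),
      p 0 = ws k ∧ ws (k + 1) = p η ∧
        ∀ t ∈ Set.Icc (0 : ℝ) η,
          HasDerivAt p (p' t) t ∧ H (p t) (p' t) = -gradient F (ws k)) :
    ∀ K : ℕ, F (ws K) - Fstar ≤
      (F (ws 0) - Fstar) * Real.exp (-(lam * α ^ 2 * K) / (γ * β ^ 2)) := by
  obtain ⟨wstar, rfl, hmin⟩ := hmin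
  have hβ : 0 < β := hα.trans_le hαβ
  set κ := lam * α ^ 2 / (γ * β ^ 2) with hκ
  have contraction : ∀ k, F (ws (k + 1)) - F wstar ≤ Real.exp (-κ) * (F (ws k) - F wstar) := by
    intro k
    have hdescent := IsMirrorlessStep.le_sub hα hβ hγ hF hsmooth hHsym hHlb hHub hη (hupd k)
    have hPL := two_mul_sub_le_norm_gradient_sq hlam.le hsc (ws k) wstar
    have hgap : κ * (F (ws k) - F wstar) ≤ α ^ 2 * ‖gradient F (ws k)‖ ^ 2 / (2 * γ * β ^ 2) := by
      calc κ * (F (ws k) - F wstar)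
          = α ^ 2 / (2 * γ * β ^ 2) * (2 * lam * (F (ws k) - F wstar)) := by
            rw [hκ]; field_simp
        _ ≤ α ^ 2 / (2 * γ * β ^ 2) * ‖gradient F (ws k)‖ ^ 2 := by gcongr
        _ = _ := by ring
    calc F (ws (k + 1)) - F wstar ≤ (1 - κ) * (F (ws k) - F wstar) := by linarith
      _ ≤ Real.exp (-κ) * (F (ws k) - F wstar) :=
          mul_le_mul_of_nonneg_right (Real.one_sub_le_exp_neg κ) (sub_nonneg.2 (hmin _))
  intro K
  calc F (ws K) - F wstar ≤ Real.exp (-κ) ^ K * (F (ws 0) - F wstar) :=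
        le_geom (u := fun k => F (ws k) - F wstar) (Real.exp_nonneg _) K fun k _ => contraction k
    _ = (F (ws 0) - F wstar) * Real.exp (-(lam * α ^ 2 * K) / (γ * β ^ 2)) := by
        rw [← Real.exp_nat_mul, mul_comm, hκ]
        ring_nf
end

section
/- Let g(w) = Aw + b be an invertible affine map. If w(t) solves the Mirror Descent discretized flow ẇ(t) = −H(w(t))⁻¹∇F(w(⌊t⌋_η)), then w̃(t) := g(w(t)) solves the corresponding discretized flow for the transformed metric H̃(w̃) = A⁻ᵀH(g⁻¹(w̃))A⁻¹ and objective F̃(w̃) = F(g⁻¹(w̃)): d w̃/dt = −H̃(w̃(t))⁻¹∇F̃(w̃(⌊t⌋_η)). -/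
open Set RealInnerProductSpace ContinuousLinearMap

/-- Invariance of the Mirror Descent discretization under an invertible affine
reparametrization `g(w) = Aw + b`: if `ẇ(t) = −H(w(t))⁻¹∇F(w(⌊t⌋_η))`, then
`w̃(t) = A w(t) + b` solves `d w̃/dt = −H̃(w̃(t))⁻¹∇F̃(w̃(⌊t⌋_η))` with
`H̃(w̃) = A⁻ᵀ H(A⁻¹(w̃ − b)) A⁻¹` and `∇F̃(w̃) = A⁻ᵀ∇F(A⁻¹(w̃ − b))`
(stated multiplying through by the metric tensor). -/
theorem stmt12 {d : ℕ}
    (A : EuclideanSpace ℝ (Fin d) ≃L[ℝ] EuclideanSpace ℝ (Fin d))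
    (b : EuclideanSpace ℝ (Fin d))
    (H : EuclideanSpace ℝ (Fin d) → (EuclideanSpace ℝ (Fin d) →L[ℝ] EuclideanSpace ℝ (Fin d)))
    (hHinv : ∀ x, IsUnit (H x))
    (F : EuclideanSpace ℝ (Fin d) → ℝ) (hF : Differentiable ℝ F)
    (η : ℝ) (hη : 0 < η)
    (w w' : ℝ → EuclideanSpace ℝ (Fin d))
    (hflow : ∀ t, HasDerivAt w (w' t) t ∧
      H (w t) (w' t) = -gradient F (w (η * (⌊t / η⌋ : ℤ)))) :
    ∀ t, HasDerivAt (fun s => A (w s) + b) (A (w' t)) t ∧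
      ((adjoint (A.symm : EuclideanSpace ℝ (Fin d) →L[ℝ] EuclideanSpace ℝ (Fin d))).comp
          ((H (A.symm ((A (w t) + b) - b))).comp
            (A.symm : EuclideanSpace ℝ (Fin d) →L[ℝ] EuclideanSpace ℝ (Fin d))))
        (A (w' t)) =
      -(adjoint (A.symm : EuclideanSpace ℝ (Fin d) →L[ℝ] EuclideanSpace ℝ (Fin d))
          (gradient F (A.symm ((A (w (η * (⌊t / η⌋ : ℤ))) + b) - b)))) := by
  intro t
  obtain ⟨hd, heq⟩ := hflow t
  constructor
  · exact ((A.hasFDerivAt.comp_hasDerivAt t hd).add_const b)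
  · simp only [add_sub_cancel_right, ContinuousLinearEquiv.symm_apply_apply, comp_apply,
      coe_coe, ContinuousLinearEquiv.coe_coe]
    rw [heq, map_neg]
end

section
/- For H(w) = diag(1/√(w_i² + 4α⁴)) on ℝ^d with α > 0, the potential ψ_α(w) = Σ_i [w_i·arcsinh(w_i/(2α²)) − √(w_i² + 4α⁴)] satisfies ∇²ψ_α(w) = H(w) for all w ∈ ℝ^d. -/
/-!
The potential is separable, `ψ_α(w) = ∑ k, φ (w k)` with `φ t = t · arsinh (t / c) - √(t² + c²)`
and `c = 2α²`, so its Hessian is `diag (φ'' (w i))`. Differentiating once gives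
`φ' t = arsinh (t / c)` (the two `t / √(t² + c²)` terms cancel), and once more
`φ'' t = 1 / √(t² + c²)`.
-/

section Scalar

variable {c : ℝ}

lemma hasDerivAt_arsinh_div (hc : 0 < c) (t : ℝ) :
    HasDerivAt (fun s : ℝ => Real.arsinh (s / c)) (1 / Real.sqrt (t ^ 2 + c ^ 2)) t := by
  have hsqrt : Real.sqrt (1 + (t / c) ^ 2) = Real.sqrt (t ^ 2 + c ^ 2) / c := by
    rw [show 1 + (t / c) ^ 2 = (t ^ 2 + c ^ 2) / c ^ 2 by field_simp; ring,
      Real.sqrt_div (by positivity), Real.sqrt_sq hc.le]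
  refine ((Real.hasDerivAt_arsinh _).comp t ((hasDerivAt_id' t).div_const c)).congr_deriv ?_
  rw [hsqrt]
  field_simp

lemma hasDerivAt_mul_arsinh_div_sub_sqrt (hc : 0 < c) (t : ℝ) :
    HasDerivAt (fun s : ℝ => s * Real.arsinh (s / c) - Real.sqrt (s ^ 2 + c ^ 2))
      (Real.arsinh (t / c)) t := by
  have hsq : HasDerivAt (fun s : ℝ => s ^ 2 + c ^ 2) (2 * t) t := by
    simpa using (hasDerivAt_pow 2 t).add_const (c ^ 2)
  refine (((hasDerivAt_id' t).mul (hasDerivAt_arsinh_div hc t)).sub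
    ((Real.hasDerivAt_sqrt (by positivity : t ^ 2 + c ^ 2 ≠ 0)).comp t hsq)).congr_deriv ?_
  field_simp
  ring

end Scalar

section Separable

variable {ι : Type*} [Fintype ι] [DecidableEq ι]

lemma fderiv_comp_apply_single {g : ℝ → ℝ} {g' : ℝ} {w : EuclideanSpace ℝ ι} {j : ι}
    (hg : HasDerivAt g g' (w j)) (i : ι) :
    fderiv ℝ (fun x : EuclideanSpace ℝ ι => g (x j)) w (EuclideanSpace.single i 1) =
      if i = j then g' else 0 := by
  have hcomp : HasFDerivAt (fun x : EuclideanSpace ℝ ι => g (x j))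
      (g' • (EuclideanSpace.proj j : EuclideanSpace ℝ ι →L[ℝ] ℝ)) w :=
    hg.comp_hasFDerivAt w (EuclideanSpace.proj j : EuclideanSpace ℝ ι →L[ℝ] ℝ).hasFDerivAt
  rw [hcomp.fderiv]
  simp [eq_comm]

lemma fderiv_sum_comp_apply_single {φ φ' : ℝ → ℝ} (hφ : ∀ t, HasDerivAt φ (φ' t) t)
    (x : EuclideanSpace ℝ ι) (j : ι) :
    fderiv ℝ (fun y : EuclideanSpace ℝ ι => ∑ k, φ (y k)) x (EuclideanSpace.single j 1) =
      φ' (x j) := by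
  have hsum : HasFDerivAt (fun y : EuclideanSpace ℝ ι => ∑ k, φ (y k))
      (∑ k, φ' (x k) • (EuclideanSpace.proj k : EuclideanSpace ℝ ι →L[ℝ] ℝ)) x :=
    HasFDerivAt.fun_sum fun k _ =>
      (hφ (x k)).comp_hasFDerivAt x
        (EuclideanSpace.proj k : EuclideanSpace ℝ ι →L[ℝ] ℝ).hasFDerivAt
  rw [hsum.fderiv]
  simp

theorem fderiv_fderiv_sum_comp_apply_single {φ φ' φ'' : ℝ → ℝ}
    (hφ : ∀ t, HasDerivAt φ (φ' t) t) (hφ' : ∀ t, HasDerivAt φ' (φ'' t) t)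
    (w : EuclideanSpace ℝ ι) (i j : ι) :
    fderiv ℝ (fun x : EuclideanSpace ℝ ι =>
        fderiv ℝ (fun y : EuclideanSpace ℝ ι => ∑ k, φ (y k)) x (EuclideanSpace.single j 1))
      w (EuclideanSpace.single i 1) = if i = j then φ'' (w i) else 0 := by
  simp only [fderiv_sum_comp_apply_single hφ]
  rw [fderiv_comp_apply_single (hφ' (w j)) i]
  split_ifs with h <;> simp [h]

end Separable

/-- The potential `ψ_α(w) = Σ_i w_i·arcsinh(w_i/(2α²)) − √(w_i² + 4α⁴)` has
Hessian `∇²ψ_α(w) = diag(1/√(w_i² + 4α⁴))`. -/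
theorem stmt14 {d : ℕ} (α : ℝ) (hα : 0 < α) :
    ∀ (w : EuclideanSpace ℝ (Fin d)) (i j : Fin d),
      fderiv ℝ
        (fun x : EuclideanSpace ℝ (Fin d) =>
          fderiv ℝ
            (fun y : EuclideanSpace ℝ (Fin d) =>
              ∑ k : Fin d, (y k * Real.arsinh (y k / (2 * α ^ 2))
                - Real.sqrt ((y k) ^ 2 + 4 * α ^ 4)))
            x (EuclideanSpace.single j 1))
        w (EuclideanSpace.single i 1) =
      if i = j then 1 / Real.sqrt ((w i) ^ 2 + 4 * α ^ 4) else 0 := by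
  intro w i j
  have hc : 0 < 2 * α ^ 2 := by positivity
  have hsq : 4 * α ^ 4 = (2 * α ^ 2) ^ 2 := by ring
  simp only [hsq]
  exact fderiv_fderiv_sum_comp_apply_single (hasDerivAt_mul_arsinh_div_sub_sqrt hc)
    (hasDerivAt_arsinh_div hc) w i j
end
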